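/- Let Σ be a set of pairs of words over ℕ in which every pair is balanced, and let Λ be the fully invariant congruence generated by Σ. Then every Λ-class is a finite set. -/

import Mathlib

/-! An endomorphism `φ` of the free semigroup replaces each letter `x` by the word `φ x`, so
the multiset of letters of `φ w` depends only on the multiset of letters of `w`. Hence when
every defining pair is balanced, all pairs of the fully invariant congruence are balanced,
and the class of `u` consists of words whose letter lists are permutations of that of `u`:
finitely many. -/

/-- The fully invariant congruence on `FreeSemigroup ℕ` generated by a set `E` of pairs
of words: the congruence generated by all pairs `(φ u, φ v)` with `(u, v) ∈ E` and `φ` a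
semigroup endomorphism of `FreeSemigroup ℕ`. -/
def ficCongruence (E : Set (FreeSemigroup ℕ × FreeSemigroup ℕ)) : Con (FreeSemigroup ℕ) :=
  conGen (fun a b => ∃ p ∈ E, ∃ φ : FreeSemigroup ℕ →ₙ* FreeSemigroup ℕ,
    a = φ p.1 ∧ b = φ p.2)

/-- The list of letters of a word in the free semigroup on `ℕ`. -/
def wordLetters (u : FreeSemigroup ℕ) : List ℕ := u.head :: u.tail

/-- A pair of words over `ℕ` is balanced if every letter occurs the same number of times
in both components. -/
def BalancedPair (p : FreeSemigroup ℕ × FreeSemigroup ℕ) : Prop :=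
  ∀ x : ℕ, (wordLetters p.1).count x = (wordLetters p.2).count x

lemma wordLetters_injective : Function.Injective wordLetters := by
  rintro ⟨a, as⟩ ⟨b, bs⟩ h
  obtain ⟨rfl, rfl⟩ := List.cons_eq_cons.mp h
  rfl

lemma wordLetters_mul (a b : FreeSemigroup ℕ) :
    wordLetters (a * b) = wordLetters a ++ wordLetters b := by
  simp [wordLetters, FreeSemigroup.head_mul, FreeSemigroup.tail_mul]

def letterMultiset (u : FreeSemigroup ℕ) : Multiset ℕ := wordLetters u

lemma letterMultiset_mul (a b : FreeSemigroup ℕ) :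
    letterMultiset (a * b) = letterMultiset a + letterMultiset b := by
  simp [letterMultiset, wordLetters_mul]

lemma letterMultiset_map (φ : FreeSemigroup ℕ →ₙ* FreeSemigroup ℕ) (w : FreeSemigroup ℕ) :
    letterMultiset (φ w) =
      (letterMultiset w).bind fun x => letterMultiset (φ (FreeSemigroup.of x)) := by
  induction w using FreeSemigroup.recOnMul with
  | ih1 x => simp [letterMultiset, wordLetters, FreeSemigroup.of]
  | ih2 a b ha hb => simp [map_mul, letterMultiset_mul, ha, hb, Multiset.add_bind]

lemma BalancedPair.letterMultiset_eq {p : FreeSemigroup ℕ × FreeSemigroup ℕ}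
    (hp : BalancedPair p) : letterMultiset p.1 = letterMultiset p.2 :=
  Multiset.coe_eq_coe.mpr (List.perm_iff_count.mpr hp)

def sameLettersCon : Con (FreeSemigroup ℕ) where
  r a b := letterMultiset a = letterMultiset b
  iseqv := ⟨fun _ => rfl, Eq.symm, Eq.trans⟩
  mul' h₁ h₂ := by simp only [letterMultiset_mul, h₁, h₂]

lemma ficCongruence_le_sameLettersCon {E : Set (FreeSemigroup ℕ × FreeSemigroup ℕ)}
    (hE : ∀ p ∈ E, BalancedPair p) : ficCongruence E ≤ sameLettersCon := by
  refine Con.conGen_le.mpr ?_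
  rintro _ _ ⟨p, hp, φ, rfl, rfl⟩
  change letterMultiset (φ p.1) = letterMultiset (φ p.2)
  rw [letterMultiset_map, letterMultiset_map, (hE p hp).letterMultiset_eq]

lemma setOf_letterMultiset_eq_finite (u : FreeSemigroup ℕ) :
    {v | letterMultiset u = letterMultiset v}.Finite := by
  have hperm : {v | letterMultiset u = letterMultiset v} ⊆
      wordLetters ⁻¹' {l | l ∈ (wordLetters u).permutations} := fun v hv =>
    List.mem_permutations.mpr (Multiset.coe_eq_coe.mp hv).symm
  exact ((List.finite_toSet _).preimage wordLetters_injective.injOn).subset hperm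

/-- If every pair in `E` is balanced, then every class of the fully invariant congruence
generated by `E` is a finite set. -/
theorem ficCongruence_classes_finite
    (E : Set (FreeSemigroup ℕ × FreeSemigroup ℕ)) (hE : ∀ p ∈ E, BalancedPair p)
    (u : FreeSemigroup ℕ) :
    {v : FreeSemigroup ℕ | ficCongruence E u v}.Finite :=
  (setOf_letterMultiset_eq_finite u).subset fun _ hv => ficCongruence_le_sameLettersCon hE hv
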